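/- Let (R, m) be a Noetherian local ring, M a finitely generated R-module, and p_1, p_2, …, p_ℓ ∈ Spec R finitely many prime ideals. If tr_R(M) is not contained in p_1 ∪ p_2 ∪ … ∪ p_ℓ, then there exists a single homomorphism f ∈ Hom_R(M, R) such that Im f is not contained in p_1 ∪ p_2 ∪ … ∪ p_ℓ. -/

import Mathlib

/-!
The image of `f` is an ideal, so by prime avoidance it suffices to find one `f` whose image
avoids each `pᵢ` separately; for each `pᵢ` some `gᵢ` does, since `tr_R(M) ⊄ pᵢ`. It is enough
to treat the maximal members `P` of `{p₁, …, p_ℓ}`, and for these we glue: choose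
`c_P ∈ ⋂_{Q ≠ P} Q` with `c_P ∉ P` and put `f = Σ c_P g_P`. If `g_P(m) ∉ P`, then
`f(m) ≡ c_P g_P(m) ∉ P` modulo `P`.
-/

/-- The trace ideal `tr_R(M) = Σ_{f ∈ Hom_R(M,R)} Im f`. -/
noncomputable def traceIdeal (R M : Type*) [CommRing R] [AddCommGroup M] [Module R M] : Ideal R :=
  ⨆ f : M →ₗ[R] R, LinearMap.range f

theorem traceIdeal_le_iff {R M : Type*} [CommRing R] [AddCommGroup M] [Module R M]
    {I : Ideal R} : traceIdeal R M ≤ I ↔ ∀ f : M →ₗ[R] R, LinearMap.range f ≤ I :=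
  iSup_le_iff

theorem Ideal.le_of_subset_iUnion_prime {R ι : Type*} [CommRing R] [Finite ι]
    {p : ι → Ideal R} (hp : ∀ i, (p i).IsPrime) {I : Ideal R}
    (h : (I : Set R) ⊆ ⋃ i, (p i : Set R)) : ∃ i, I ≤ p i := by
  have := Fintype.ofFinite ι
  cases isEmpty_or_nonempty ι with
  | inl _ => simpa using h I.zero_mem
  | inr hι =>
    obtain ⟨a⟩ := hι
    simpa using (Ideal.subset_union_prime (s := Finset.univ) a a fun i _ _ _ => hp i).mp
      (by simpa using h)

theorem Ideal.exists_mem_inf_notMem_of_isPrime {R ι : Type*} [CommRing R] {s : Finset ι}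
    {q : ι → Ideal R} {P : Ideal R} (hP : P.IsPrime) (hq : ∀ i ∈ s, ¬ q i ≤ P) :
    ∃ c ∈ s.inf q, c ∉ P :=
  SetLike.not_le_iff_exists.mp fun hle =>
    let ⟨i, hi, hle⟩ := hP.inf_le'.mp hle
    hq i hi hle

section AvoidingPrimes

variable {R M : Type*} [CommRing R] [AddCommGroup M] [Module R M]

theorem exists_linearMap_forall_range_not_le_of_antichain {T : Finset (Ideal R)}
    (hprime : ∀ P ∈ T, P.IsPrime) (hanti : ∀ P ∈ T, ∀ Q ∈ T, Q ≤ P → Q = P)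
    (hg : ∀ P ∈ T, ∃ g : M →ₗ[R] R, ¬ LinearMap.range g ≤ P) :
    ∃ f : M →ₗ[R] R, ∀ P ∈ T, ¬ LinearMap.range f ≤ P := by
  classical
  have hgm : ∀ P ∈ T, ∃ (g : M →ₗ[R] R) (m : M), g m ∉ P := fun P hP => by
    obtain ⟨g, hg⟩ := hg P hP
    obtain ⟨_, ⟨m, rfl⟩, hm⟩ := SetLike.not_le_iff_exists.mp hg
    exact ⟨g, m, hm⟩
  choose! g m hgm using hgm
  have hc : ∀ P ∈ T, ∃ c ∈ (T.erase P).inf id, c ∉ P := fun P hP =>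
    Ideal.exists_mem_inf_notMem_of_isPrime (hprime P hP) fun Q hQ hle =>
      (Finset.ne_of_mem_erase hQ) (hanti P hP Q (Finset.mem_of_mem_erase hQ) hle)
  choose! c hcT hcP using hc
  refine ⟨∑ Q ∈ T, c Q • g Q, fun P hP hle => ?_⟩
  have hother : ∑ Q ∈ T.erase P, c Q * g Q (m P) ∈ P := by
    refine Ideal.sum_mem _ fun Q hQ => Ideal.mul_mem_right _ _ ?_
    have hPQ : P ∈ T.erase Q := Finset.mem_erase.mpr ⟨(Finset.ne_of_mem_erase hQ).symm, hP⟩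
    exact Finset.inf_le (f := id) hPQ (hcT Q (Finset.mem_of_mem_erase hQ))
  have hsum : c P * g P (m P) + ∑ Q ∈ T.erase P, c Q * g Q (m P) ∈ P := by
    rw [Finset.add_sum_erase T (fun Q => c Q * g Q (m P)) hP]
    simpa using hle (LinearMap.mem_range_self _ (m P))
  rcases (hprime P hP).mem_or_mem ((Ideal.add_mem_iff_left _ hother).mp hsum) with h | h
  exacts [hcP P hP h, hgm P hP h]

theorem exists_linearMap_forall_range_not_le {T : Finset (Ideal R)}
    (hprime : ∀ P ∈ T, P.IsPrime) (hg : ∀ P ∈ T, ∃ g : M →ₗ[R] R, ¬ LinearMap.range g ≤ P) :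
    ∃ f : M →ₗ[R] R, ∀ P ∈ T, ¬ LinearMap.range f ≤ P := by
  classical
  obtain ⟨f, hf⟩ := exists_linearMap_forall_range_not_le_of_antichain
    (T := T.filter (Maximal (· ∈ T)))
    (fun P hP => hprime P (Finset.mem_filter.mp hP).1)
    (fun P hP Q hQ hle => le_antisymm hle ((Finset.mem_filter.mp hQ).2.le_of_ge
      (Finset.mem_filter.mp hP).1 hle))
    (fun P hP => hg P (Finset.mem_filter.mp hP).1)
  refine ⟨f, fun P hP hle => ?_⟩
  obtain ⟨Q, hPQ, hQ⟩ := T.exists_le_maximal hP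
  exact hf Q (Finset.mem_filter.mpr ⟨hQ.prop, hQ⟩) (hle.trans hPQ)

end AvoidingPrimes

theorem stmt2_general (R M : Type*) [CommRing R]
    [AddCommGroup M] [Module R M]
    (ℓ : ℕ) (p : Fin ℓ → Ideal R) (hp : ∀ i, (p i).IsPrime)
    (h : ¬ ((traceIdeal R M : Set R) ⊆ ⋃ i, (p i : Set R))) :
    ∃ f : M →ₗ[R] R, ¬ ((LinearMap.range f : Set R) ⊆ ⋃ i, (p i : Set R)) := by
  classical
  have htr : ∀ i, ¬ traceIdeal R M ≤ p i := fun i hle =>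
    h fun _ hx => Set.mem_iUnion.mpr ⟨i, hle hx⟩
  obtain ⟨f, hf⟩ := exists_linearMap_forall_range_not_le (M := M) (T := Finset.univ.image p)
    (by simpa using hp) (by simpa [traceIdeal_le_iff] using htr)
  refine ⟨f, fun hsub => ?_⟩
  obtain ⟨i, hi⟩ := Ideal.le_of_subset_iUnion_prime hp hsub
  exact hf (p i) (Finset.mem_image_of_mem p (Finset.mem_univ i)) hi

/-- Let `(R, m)` be a Noetherian local ring, `M` a finitely generated
`R`-module, and `p₁, …, p_ℓ` finitely many prime ideals of `R`. If `tr_R(M)` is not contained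
in `p₁ ∪ ⋯ ∪ p_ℓ`, then there exists a single homomorphism `f : M → R` whose image is not
contained in `p₁ ∪ ⋯ ∪ p_ℓ`. -/
theorem stmt2 (R M : Type*) [CommRing R] [IsNoetherianRing R] [IsLocalRing R]
    [AddCommGroup M] [Module R M] [Module.Finite R M]
    (ℓ : ℕ) (p : Fin ℓ → Ideal R) (hp : ∀ i, (p i).IsPrime)
    (h : ¬ ((traceIdeal R M : Set R) ⊆ ⋃ i, (p i : Set R))) :
    ∃ f : M →ₗ[R] R, ¬ ((LinearMap.range f : Set R) ⊆ ⋃ i, (p i : Set R)) :=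
  stmt2_general R M ℓ p hp h
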